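/- arXiv:2103.17134 — 3 statements merged into one kernel-verified Lean document; each statement's English description precedes it below -/
import Mathlib

section
/- Let n ≥ 2 be a natural number and let g : ℝ → ℝ be infinitely differentiable (C^∞) such that all odd-order iterated derivatives of g vanish at 0, i.e. g^{(2j+1)}(0) = 0 for every j ∈ ℕ. Define f : ℝ → ℝ by f(t) = ∫₀¹ (1−s)^{n−2} · g(s·t) ds. Then all odd-order iterated derivatives of f vanish at 0: f^{(2j+1)}(0) = 0 for every j ∈ ℕ. -/
/-!
Differentiating `k` times under the integral sign gives
`f⁽ᵏ⁾(0) = g⁽ᵏ⁾(0) · ∫₀¹ (1 - s)^(n-2) sᵏ ds`, so `f⁽ᵏ⁾(0)` vanishes whenever `g⁽ᵏ⁾(0)` does.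
-/

open intervalIntegral Set Function
open scoped ContDiff

theorem hasDerivAt_intervalIntegral_of_continuous {E : Type*} [NormedAddCommGroup E]
    [NormedSpace ℝ E] [CompleteSpace E] {F F' : ℝ → ℝ → E} {a b : ℝ}
    (hF : Continuous (uncurry F)) (hF' : Continuous (uncurry F'))
    (hderiv : ∀ t s, HasDerivAt (F · s) (F' t s) t) (t₀ : ℝ) :
    HasDerivAt (fun t => ∫ s in a..b, F t s) (∫ s in a..b, F' t₀ s) t₀ := by
  obtain ⟨M, hM⟩ : ∃ M, ∀ p ∈ Metric.closedBall t₀ 1 ×ˢ uIcc a b, ‖uncurry F' p‖ ≤ M :=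
    ((isCompact_closedBall t₀ 1).prod isCompact_uIcc).exists_bound_of_continuousOn
      hF'.continuousOn
  have hF_cont (t : ℝ) : Continuous (F t) := hF.comp (Continuous.prodMk_right t)
  refine (hasDerivAt_integral_of_dominated_loc_of_deriv_le (bound := fun _ => M)
    (Metric.closedBall_mem_nhds t₀ one_pos) (.of_forall fun t => (hF_cont t).aestronglyMeasurable)
    ((hF_cont t₀).intervalIntegrable a b)
    (hF'.comp (Continuous.prodMk_right t₀)).aestronglyMeasurable
    (.of_forall fun s hs t ht => hM (t, s) ⟨ht, uIoc_subset_uIcc hs⟩)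
    intervalIntegrable_const (.of_forall fun s _ t _ => hderiv t s)).2

theorem hasDerivAt_intervalIntegral_mul_comp_mul {ψ G : ℝ → ℝ} {a b : ℝ} (hψ : Continuous ψ)
    (hG : ContDiff ℝ 1 G) (t₀ : ℝ) :
    HasDerivAt (fun t => ∫ s in a..b, ψ s * G (s * t))
      (∫ s in a..b, ψ s * s * deriv G (s * t₀)) t₀ := by
  have hG' : Continuous (deriv G) := hG.continuous_deriv le_rfl
  refine hasDerivAt_intervalIntegral_of_continuous (F := fun t s => ψ s * G (s * t))
    (F' := fun t s => ψ s * s * deriv G (s * t)) (by fun_prop) (by fun_prop) (fun t s => ?_) t₀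
  have := ((hG.differentiable one_ne_zero (s * t)).hasDerivAt.comp t
    ((hasDerivAt_id t).const_mul s)).const_mul (ψ s)
  simpa [mul_comm, mul_left_comm, mul_assoc] using this

theorem iteratedDeriv_intervalIntegral_mul_comp_mul {ψ g : ℝ → ℝ} {a b : ℝ} (hψ : Continuous ψ)
    (hg : ContDiff ℝ ∞ g) (k : ℕ) :
    iteratedDeriv k (fun t => ∫ s in a..b, ψ s * g (s * t))
      = fun t => ∫ s in a..b, ψ s * s ^ k * iteratedDeriv k g (s * t) := by
  induction k with
  | zero => simp
  | succ k ih =>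
    have hgk : ContDiff ℝ 1 (iteratedDeriv k g) := by
      rw [iteratedDeriv_eq_iterate]; exact (hg.iterate_deriv k).of_le (by exact_mod_cast le_top)
    ext t
    have hψk : Continuous fun s => ψ s * s ^ k := by fun_prop
    rw [iteratedDeriv_succ, ih, iteratedDeriv_succ,
      (hasDerivAt_intervalIntegral_mul_comp_mul hψk hgk t).deriv]
    simp only [pow_succ, mul_assoc]

theorem odd_derivs_vanish_param_integral_general (n : ℕ) (g : ℝ → ℝ)
    (hg : ContDiff ℝ (⊤ : ℕ∞) g)
    (hodd : ∀ j : ℕ, iteratedDeriv (2 * j + 1) g 0 = 0) (f : ℝ → ℝ)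
    (hf : ∀ t : ℝ, f t = ∫ s in (0 : ℝ)..1, (1 - s) ^ (n - 2) * g (s * t)) :
    ∀ j : ℕ, iteratedDeriv (2 * j + 1) f 0 = 0 := by
  intro j
  rw [funext hf, iteratedDeriv_intervalIntegral_mul_comp_mul (by fun_prop) hg]
  simp [hodd j]

/-- If all odd-order derivatives of `g` vanish at `0`, then all odd-order derivatives of
`f(t) = ∫₀¹ (1-s)^(n-2) g(s t) ds` vanish at `0`. -/
theorem odd_derivs_vanish_param_integral (n : ℕ) (hn : 2 ≤ n) (g : ℝ → ℝ)
    (hg : ContDiff ℝ (⊤ : ℕ∞) g)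
    (hodd : ∀ j : ℕ, iteratedDeriv (2 * j + 1) g 0 = 0) (f : ℝ → ℝ)
    (hf : ∀ t : ℝ, f t = ∫ s in (0 : ℝ)..1, (1 - s) ^ (n - 2) * g (s * t)) :
    ∀ j : ℕ, iteratedDeriv (2 * j + 1) f 0 = 0 :=
  odd_derivs_vanish_param_integral_general n g hg hodd f hf
end

section
/- Let R > 0 and λ > 0 be real numbers, let b : ℝ → ℝ be continuous on (0,R), and let f : ℝ → ℝ be twice continuously differentiable on [0,R] with: f(t) > 0 for every t ∈ [0,R); f'(0) = 0 and f''(0) < 0; and f''(t) + b(t)·f'(t) + λ·f(t) = 0 for every t ∈ (0,R). Then f'(t) < 0 for every t ∈ (0,R). -/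
/-- A positive solution of the radial eigenfunction ODE `f'' + b f' + λ f = 0` on `(0,R)`
with `f'(0) = 0` and `f''(0) < 0` is strictly decreasing on `(0,R)`. -/
theorem radial_eigenfunction_strictly_decreasing (R lam : ℝ) (hR : 0 < R) (hlam : 0 < lam)
    (b f f' f'' : ℝ → ℝ)
    (hb : ContinuousOn b (Set.Ioo 0 R))
    (hf' : ∀ t ∈ Set.Icc (0 : ℝ) R, HasDerivWithinAt f (f' t) (Set.Icc 0 R) t)
    (hf'' : ∀ t ∈ Set.Icc (0 : ℝ) R, HasDerivWithinAt f' (f'' t) (Set.Icc 0 R) t)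
    (hf''cont : ContinuousOn f'' (Set.Icc 0 R))
    (hfpos : ∀ t ∈ Set.Ico (0 : ℝ) R, 0 < f t)
    (hf'0 : f' 0 = 0) (hf''0 : f'' 0 < 0)
    (hode : ∀ t ∈ Set.Ioo (0 : ℝ) R, f'' t + b t * f' t + lam * f t = 0) :
    ∀ t ∈ Set.Ioo (0 : ℝ) R, f' t < 0 := by
  have hf'cont : ContinuousOn f' (Set.Icc 0 R) := fun t ht => (hf'' t ht).continuousWithinAt
  -- Step 1: f' < 0 on some (0, ε]
  have hslope0 : Filter.Tendsto (slope f' 0) (nhdsWithin 0 (Set.Ioi 0)) (nhds (f'' 0)) := by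
    have h := hasDerivWithinAt_iff_tendsto_slope.1 (hf'' 0 ⟨le_refl 0, hR.le⟩)
    refine h.mono_left (nhdsWithin_le_of_mem ?_)
    have hsub : Set.Ioc (0:ℝ) R ⊆ Set.Icc 0 R \ {0} := fun x hx =>
      ⟨⟨hx.1.le, hx.2⟩, ne_of_gt hx.1⟩
    exact Filter.mem_of_superset (Ioc_mem_nhdsGT_of_mem ⟨le_refl 0, hR⟩) hsub
  have hev : ∀ᶠ t in nhdsWithin 0 (Set.Ioi (0:ℝ)), slope f' 0 t < 0 :=
    hslope0.eventually_lt_const hf''0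
  obtain ⟨u, hu, hIoc⟩ := mem_nhdsGT_iff_exists_Ioc_subset.1 hev
  set ε : ℝ := min u (R/2) with hε
  have hε0 : 0 < ε := lt_min hu (by linarith)
  have hεR : ε < R := lt_of_le_of_lt (min_le_right _ _) (by linarith)
  have hneg_small : ∀ t ∈ Set.Ioc (0:ℝ) ε, f' t < 0 := by
    intro t ht
    have hsl : slope f' 0 t < 0 := hIoc ⟨ht.1, le_trans ht.2 (min_le_left _ _)⟩
    rw [slope_def_field, hf'0, sub_zero, sub_zero] at hsl
    rcases div_neg_iff.1 hsl with h | h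
    · exact absurd ht.1 (not_lt.2 h.2.le)
    · exact h.1
  -- main argument by contradiction
  intro t₀ ht₀
  by_contra hcon
  push_neg at hcon
  by_cases hcase : t₀ ≤ ε
  · exact absurd (hneg_small t₀ ⟨ht₀.1, hcase⟩) (not_lt.2 hcon)
  push_neg at hcase
  -- first point ≥ ε where f' ≥ 0
  set S : Set ℝ := Set.Icc ε t₀ ∩ f' ⁻¹' Set.Ici 0 with hS
  have hScl : IsClosed S :=
    ContinuousOn.preimage_isClosed_of_isClosed
      (hf'cont.mono (Set.Icc_subset_Icc hε0.le ht₀.2.le)) isClosed_Icc isClosed_Ici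
  have hSne : S.Nonempty := ⟨t₀, ⟨hcase.le, le_refl _⟩, hcon⟩
  have hSbdd : BddBelow S := ⟨ε, fun x hx => hx.1.1⟩
  set s := sInf S with hs
  have hsS : s ∈ S := hScl.csInf_mem hSne hSbdd
  have hsε : ε ≤ s := hsS.1.1
  have hst₀ : s ≤ t₀ := hsS.1.2
  have hs0 : 0 < s := lt_of_lt_of_le hε0 hsε
  have hsR : s < R := lt_of_le_of_lt hst₀ ht₀.2
  have hsIcc : s ∈ Set.Icc (0:ℝ) R := ⟨hs0.le, hsR.le⟩
  -- f' < 0 on (0, s)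
  have hnegs : ∀ t ∈ Set.Ioo (0:ℝ) s, f' t < 0 := by
    intro t ht
    by_cases h : t ≤ ε
    · exact hneg_small t ⟨ht.1, h⟩
    · push_neg at h
      by_contra hge
      push_neg at hge
      have htS : t ∈ S := ⟨⟨h.le, le_trans ht.2.le hst₀⟩, hge⟩
      exact absurd (csInf_le hSbdd htS) (not_le.2 ht.2)
  have hIooMem : Set.Ioo (0:ℝ) s ∈ nhdsWithin s (Set.Iio s) :=
    Ioo_mem_nhdsLT_of_mem ⟨hs0, le_refl s⟩
  -- f' s = 0
  have hf'seq : f' s = 0 := by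
    have hmemIio : Set.Icc (0:ℝ) R ∈ nhdsWithin s (Set.Iio s) :=
      Filter.mem_of_superset hIooMem (fun x hx => ⟨hx.1.le, le_trans hx.2.le hsR.le⟩)
    have hf'tend : Filter.Tendsto f' (nhdsWithin s (Set.Iio s)) (nhds (f' s)) :=
      (hf'cont s hsIcc).mono_left (nhdsWithin_le_of_mem hmemIio)
    have hle : f' s ≤ 0 := by
      refine le_of_tendsto hf'tend ?_
      filter_upwards [hIooMem] with x hx
      exact (hnegs x hx).le
    exact le_antisymm hle hsS.2
  -- ODE at s gives f'' s < 0
  have hf''s : f'' s < 0 := by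
    have h := hode s ⟨hs0, hsR⟩
    have hfs : 0 < f s := hfpos s ⟨hs0.le, hsR⟩
    rw [hf'seq] at h
    nlinarith
  -- slope of f' at s from the left is eventually negative, yielding f' > 0 just left of s
  have hslopes : Filter.Tendsto (slope f' s) (nhdsWithin s (Set.Iio s)) (nhds (f'' s)) := by
    have h := hasDerivWithinAt_iff_tendsto_slope.1 (hf'' s hsIcc)
    refine h.mono_left (nhdsWithin_le_of_mem ?_)
    refine Filter.mem_of_superset hIooMem (fun x hx => ⟨⟨hx.1.le, le_trans hx.2.le hsR.le⟩, ?_⟩)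
    exact ne_of_lt hx.2
  have hev2 : ∀ᶠ t in nhdsWithin s (Set.Iio s), slope f' s t < 0 :=
    hslopes.eventually_lt_const hf''s
  have hNeBot : (nhdsWithin s (Set.Iio s)).NeBot := nhdsLT_neBot s
  obtain ⟨t, hts, htIoo⟩ := (hev2.and (Filter.eventually_mem_set.2 hIooMem)).exists
  -- at t : slope < 0 and t ∈ (0,s), so f' t > 0; contradiction with hnegs
  rw [slope_def_field, hf'seq, sub_zero] at hts
  have hts' : 0 < f' t := by
    rcases div_neg_iff.1 hts with h | h
    · exact h.1
    · exact absurd h.2 (not_lt.2 (by linarith [htIoo.2]))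
  exact absurd (hnegs t htIoo) (not_lt.2 hts'.le)
end

section
/- Let f : ℝ → ℝ be infinitely differentiable (C^∞) and suppose that all odd-order iterated derivatives of f vanish at 0, i.e. f^{(2j+1)}(0) = 0 for every j ∈ ℕ. Then the even reflection f̃ : ℝ → ℝ defined by f̃(t) = f(|t|) is infinitely differentiable (C^∞) on ℝ. -/
/-!
For `ε : ℝ`, glue `f` on `[0, ∞)` to `t ↦ ε • f (-t)` on `(-∞, 0)`; `ε = 1` gives the even
reflection `f |t|`. Away from `0` the derivative of this glued function is the `(-ε)`-glued
function of `f'`, and it is so at `0` too as soon as the values and derivatives of the two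
branches agree there. The `k`-th derivative of `t ↦ ε • f (-t)` at `0` is
`ε (-1)ᵏ f⁽ᵏ⁾(0)`, so the condition `ε (-1)ᵏ f⁽ᵏ⁾(0) = f⁽ᵏ⁾(0)` for all `k` passes from
`(ε, f)` to `(-ε, f')`, and induction on the order gives smoothness. For `ε = 1` this
condition says exactly that the odd derivatives of `f` vanish at `0`.
-/

open Set
open scoped ContDiff

section

variable {F : Type*} [NormedAddCommGroup F] [NormedSpace ℝ F]

theorem hasDerivAt_ite_lt {g h g' h' : ℝ → F} {a : ℝ}
    (hg : ∀ t, HasDerivAt g (g' t) t) (hh : ∀ t, HasDerivAt h (h' t) t)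
    (hval : g a = h a) (hder : g' a = h' a) (t : ℝ) :
    HasDerivAt (fun s => if s < a then g s else h s) (if t < a then g' t else h' t) t := by
  rcases lt_trichotomy t a with ht | rfl | ht
  · rw [if_pos ht]
    refine (hg t).congr_of_eventuallyEq ?_
    filter_upwards [Iio_mem_nhds ht] with s hs
    exact if_pos hs
  · rw [if_neg (lt_irrefl t), ← hasDerivWithinAt_univ, ← Iic_union_Ici]
    refine .union ?_ ?_
    · refine hder ▸ (hg t).hasDerivWithinAt.congr (fun s hs => ?_) (by simp [hval])
      rcases (mem_Iic.1 hs).lt_or_eq with hs | rfl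
      · exact if_pos hs
      · simp [hval]
    · exact (hh t).hasDerivWithinAt.congr (fun s hs => if_neg (not_lt.2 hs)) (by simp)
  · rw [if_neg ht.not_gt]
    refine (hh t).congr_of_eventuallyEq ?_
    filter_upwards [Ioi_mem_nhds ht] with s hs
    rw [if_neg (not_lt.2 (mem_Ioi.1 hs).le)]

noncomputable def signedReflection (ε : ℝ) (f : ℝ → F) (t : ℝ) : F :=
  if t < 0 then ε • f (-t) else f t

theorem hasDerivAt_signedReflection {ε : ℝ} {f : ℝ → F} (hf : Differentiable ℝ f)
    (hval : ε • f 0 = f 0) (hder : -ε • deriv f 0 = deriv f 0) (t : ℝ) :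
    HasDerivAt (signedReflection ε f) (signedReflection (-ε) (deriv f) t) t := by
  refine hasDerivAt_ite_lt (a := 0) (g := fun s => ε • f (-s))
    (g' := fun s => -ε • deriv f (-s)) (fun s => ?_) (fun s => (hf s).hasDerivAt)
    (by simpa using hval) (by simpa using hder) t
  simpa [Function.comp_def, Pi.smul_def] using
    ((hf (-s)).hasDerivAt.scomp s (hasDerivAt_neg s)).const_smul ε

theorem contDiff_signedReflection (n : ℕ) {ε : ℝ} {f : ℝ → F} (hf : ContDiff ℝ ∞ f)
    (hparity : ∀ k, (ε * (-1) ^ k) • iteratedDeriv k f 0 = iteratedDeriv k f 0) :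
    ContDiff ℝ n (signedReflection ε f) := by
  induction n generalizing ε f
  all_goals
    have hD := hasDerivAt_signedReflection (hf.differentiable (by simp))
      (by simpa using hparity 0) (by simpa using hparity 1)
  case zero => exact contDiff_zero.2 (continuous_iff_continuousAt.2 fun t => (hD t).continuousAt)
  case succ n ih =>
    rw [Nat.cast_succ, contDiff_succ_iff_deriv]
    refine ⟨fun t => (hD t).differentiableAt, by simp, ?_⟩
    rw [funext fun t => (hD t).deriv]
    refine ih (contDiff_infty_iff_deriv.1 hf).2 fun k => ?_
    simpa [iteratedDeriv_succ', pow_succ] using hparity (k + 1)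

end

/-- Even reflection of a smooth function whose odd-order derivatives vanish at `0` is
smooth. -/
theorem even_reflection_smooth (f : ℝ → ℝ) (hf : ContDiff ℝ (⊤ : ℕ∞) f)
    (hodd : ∀ j : ℕ, iteratedDeriv (2 * j + 1) f 0 = 0) :
    ContDiff ℝ (⊤ : ℕ∞) (fun t => f |t|) := by
  have heven : signedReflection 1 f = fun t => f |t| := by
    funext t
    unfold signedReflection
    split_ifs with ht
    · rw [one_smul, abs_of_neg ht]
    · rw [abs_of_nonneg (not_lt.1 ht)]
  have hparity (k : ℕ) : 1 * (-1) ^ k * iteratedDeriv k f 0 = iteratedDeriv k f 0 := by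
    rcases Nat.even_or_odd' k with ⟨j, rfl | rfl⟩
    · simp [pow_mul]
    · simp [hodd j]
  exact heven ▸ contDiff_infty.2 fun n => contDiff_signedReflection n hf hparity
end
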